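/- Let {x_j}_{j∈J} be a standard frame in a Hilbert A-module N with frame constants c₁, c₂, frame operator Θ : N → ℓ²_J(A), Θ(x) = (⟨x_j,x⟩)_j, and canonical dual frame g_j = (Θ*Θ)^{-1} x_j. Then for every finite subset J' ⊆ J, the partial reconstruction operator P_{J'}(x) = Σ_{j∈J'} x_j⟨g_j,x⟩ satisfies ‖P_{J'}‖ ≤ c₂/c₁. -/

import Mathlib

open scoped RightActions

/-- The December 2024 Mathlib `CStarModule` (right `A`-module, inner product `A`-linear on the
right: `⟪x, y <• a⟫ = ⟪x, y⟫ * a`), restated since Mathlib's class now has a different meaning. -/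
class CStarModuleRight (A : outParam <| Type*) (E : Type*) [NonUnitalSemiring A] [StarRing A]
    [Module ℂ A] [AddCommGroup E] [Module ℂ E] [PartialOrder A] [SMul Aᵐᵒᵖ E] [Norm A] [Norm E]
    extends Inner A E where
  inner_add_right {x} {y} {z} : inner x (y + z) = inner x y + inner x z
  inner_self_nonneg {x} : 0 ≤ inner x x
  inner_self {x} : inner x x = 0 ↔ x = 0
  inner_op_smul_right {a : A} {x y : E} : inner x (y <• a) = inner x y * a
  inner_smul_right_complex {z : ℂ} {x} {y} : inner x (z • y) = z • inner x y
  star_inner x y : star (inner x y) = inner y x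
  norm_eq_sqrt_norm_inner_self x : ‖x‖ = √‖inner x x‖

/-- A family `x : J → E` is a standard frame of the Hilbert `A`-module `E` with frame
constants `c₁, c₂ > 0`. -/
def IsStandardFrame {A E : Type*} [NonUnitalCStarAlgebra A] [PartialOrder A]
    [StarOrderedRing A] [NormedAddCommGroup E] [NormedSpace ℂ E] [SMul Aᵐᵒᵖ E]
    [CStarModuleRight A E] {J : Type*} (x : J → E) (c₁ c₂ : ℝ) : Prop :=
  0 < c₁ ∧ 0 < c₂ ∧ ∀ v : E, ∃ S : A,
    HasSum (fun j => (inner A v (x j)) * (inner A (x j) v)) S ∧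
    c₁ • (inner A v v) ≤ S ∧ S ≤ c₂ • (inner A v v)

open scoped WithCStarModule

/-- Finite Cauchy–Schwarz inequality in a C⋆-algebra. -/
lemma cstar_sum_cauchy_schwarz {A : Type*} [NonUnitalCStarAlgebra A] [PartialOrder A]
    [StarOrderedRing A] {ι : Type*} [Fintype ι] (a b : ι → A) :
    ‖∑ i, star (a i) * b i‖ ≤
      Real.sqrt ‖∑ i, star (a i) * a i‖ * Real.sqrt ‖∑ i, star (b i) * b i‖ := by
  let u : C⋆ᵐᵒᵈ(A, ι → A) := (WithCStarModule.equiv A (ι → A)).symm (fun i => star (b i))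
  let v : C⋆ᵐᵒᵈ(A, ι → A) := (WithCStarModule.equiv A (ι → A)).symm (fun i => star (a i))
  have h := CStarModule.norm_inner_le (A := A) (C⋆ᵐᵒᵈ(A, ι → A)) (x := u) (y := v)
  rw [WithCStarModule.pi_inner] at h
  rw [WithCStarModule.pi_norm, WithCStarModule.pi_norm] at h
  rw [mul_comm (Real.sqrt ‖∑ i, star (a i) * a i‖)]
  simpa [u, v, WithCStarModule.inner_def] using h

namespace CStarModuleRight

section

variable {A E : Type*} [NonUnitalCStarAlgebra A] [PartialOrder A] [StarOrderedRing A]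
  [NormedAddCommGroup E] [NormedSpace ℂ E] [SMul Aᵐᵒᵖ E] [CStarModuleRight A E]

lemma inner_zero_right {x : E} : inner A x 0 = 0 := by
  have h := inner_add_right (A := A) (x := x) (y := (0 : E)) (z := 0)
  rw [add_zero] at h
  simpa using h

lemma inner_neg_right {x y : E} : inner A x (-y) = - inner A x y := by
  have h := inner_add_right (A := A) (x := x) (y := y) (z := -y)
  rw [add_neg_cancel, inner_zero_right] at h
  rw [eq_neg_iff_add_eq_zero, add_comm]
  exact h.symm

lemma inner_sub_right {x y z : E} : inner A x (y - z) = inner A x y - inner A x z := by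
  rw [sub_eq_add_neg, inner_add_right, inner_neg_right, ← sub_eq_add_neg]

lemma inner_sub_left {x y z : E} : inner A (x - y) z = inner A x z - inner A y z := by
  rw [← star_inner z, inner_sub_right, star_sub, star_inner, star_inner]

lemma inner_op_smul_left {a : A} {x y : E} : inner A (x <• a) y = star a * inner A x y := by
  rw [← star_inner y, inner_op_smul_right, star_mul, star_inner]

lemma inner_smul_right_real {t : ℝ} {x y : E} : inner A x (t • y) = t • inner A x y := by
  rw [← Complex.coe_smul, inner_smul_right_complex, Complex.coe_smul]

lemma inner_smul_left_real {t : ℝ} {x y : E} : inner A (t • x) y = t • inner A x y := by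
  rw [← star_inner y, inner_smul_right_real, star_smul, star_trivial, star_inner]

/-- `inner A u ·` as a linear map. -/
def innerL (u : E) : E →ₗ[ℂ] A where
  toFun y := inner A u y
  map_add' _ _ := inner_add_right
  map_smul' _ _ := by rw [RingHom.id_apply]; exact inner_smul_right_complex

lemma inner_sum_right {ι : Type*} {s : Finset ι} {x : E} {y : ι → E} :
    inner A x (∑ i ∈ s, y i) = ∑ i ∈ s, inner A x (y i) :=
  map_sum (innerL (A := A) x) y s

lemma norm_sq_eq {x : E} : ‖x‖ ^ 2 = ‖inner A x x‖ := by
  rw [norm_eq_sqrt_norm_inner_self (A := A) x, Real.sq_sqrt (norm_nonneg _)]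

lemma inner_mul_inner_swap_le {x y : E} :
    inner A y x * inner A x y ≤ ‖x‖ ^ 2 • inner A y y := by
  rcases eq_or_ne x 0 with h | h
  · subst h
    have h0 : inner A (0 : E) y = 0 := by rw [← star_inner y, inner_zero_right, star_zero]
    rw [h0, mul_zero, norm_zero]
    simp
  · set t := ‖x‖ ^ 2 with ht
    have htpos : 0 < t := pow_pos (norm_pos_iff.mpr h) 2
    set a := inner A x y with ha
    have hsa : star a = inner A y x := star_inner x y
    have h0 : (0 : A) ≤ inner A (x <• a - t • y) (x <• a - t • y) := inner_self_nonneg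
    have hexp : inner A (x <• a - t • y) (x <• a - t • y)
        = star a * inner A x x * a - t • (star a * a) - t • (star a * a)
          + t • t • inner A y y := by
      simp only [inner_sub_left, inner_sub_right, inner_op_smul_left, inner_op_smul_right,
        inner_smul_left_real, inner_smul_right_real, ← ha, ← hsa, mul_smul_comm, smul_mul_assoc,
        mul_assoc, smul_sub, sub_mul, mul_sub]
      abel
    have hle : star a * inner A x x * a ≤ t • (star a * a) := by
      calc star a * inner A x x * a ≤ ‖inner A x x‖ • (star a * a) :=
            CStarAlgebra.star_left_conjugate_le_norm_smul (hb := star_inner x x)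
        _ = t • (star a * a) := by rw [ht, norm_sq_eq]
    have h1 : (0 : A) ≤ t • (t • inner A y y - star a * a) := by
      rw [hexp] at h0
      calc (0 : A) ≤ _ := h0
        _ ≤ t • (star a * a) - t • (star a * a) - t • (star a * a) + t • t • inner A y y := by
          gcongr
        _ = t • (t • inner A y y - star a * a) := by rw [smul_sub]; abel
    have h2 : (0 : A) ≤ t • inner A y y - star a * a := by
      have := smul_nonneg (inv_nonneg.mpr htpos.le) h1
      rwa [smul_smul, inv_mul_cancel₀ htpos.ne', one_smul] at this
    rw [← hsa]
    exact sub_nonneg.mp h2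

variable (E) in
lemma norm_inner_le {x y : E} : ‖inner A x y‖ ≤ ‖x‖ * ‖y‖ := by
  have := calc ‖inner A x y‖ ^ 2 = ‖star (inner A x y) * inner A x y‖ := by
                rw [CStarRing.norm_star_mul_self, pow_two]
    _ = ‖inner A y x * inner A x y‖ := by rw [star_inner]
    _ ≤ ‖‖x‖ ^ 2 • inner A y y‖ :=
        CStarAlgebra.norm_le_norm_of_nonneg_of_le
          (by rw [← star_inner x y]; exact star_mul_self_nonneg _) inner_mul_inner_swap_le
    _ = ‖x‖ ^ 2 * ‖y‖ ^ 2 := by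
        rw [norm_smul, Real.norm_of_nonneg (by positivity), ← norm_sq_eq]
    _ = (‖x‖ * ‖y‖) ^ 2 := by ring
  exact (pow_le_pow_iff_left₀ (norm_nonneg _) (by positivity) two_ne_zero).mp this

/-- `inner A u ·` as a continuous linear map. -/
noncomputable def innerSL (u : E) : E →L[ℂ] A :=
  LinearMap.mkContinuous (innerL (A := A) u) ‖u‖ (fun _ => norm_inner_le E)

lemma innerSL_apply {u y : E} : innerSL (A := A) u y = inner A u y := rfl

end

end CStarModuleRight

/-- Let `{x_j}` be a standard frame with constants `c₁, c₂`, let `W = Θ*Θ` be the frame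
operator composition (so `W v = Σ_j x_j⟨x_j,v⟩`), invertible with bounded inverse `Winv`,
and let `g_j = W⁻¹ x_j` be the canonical dual frame.  Then every partial reconstruction
operator `P_{J'} v = Σ_{j∈J'} x_j⟨g_j,v⟩` (`J' ⊆ J` finite) has norm at most `c₂/c₁`. -/
theorem stmt_3 {A E : Type*} [NonUnitalCStarAlgebra A] [PartialOrder A] [StarOrderedRing A]
    [NormedAddCommGroup E] [NormedSpace ℂ E] [SMul Aᵐᵒᵖ E] [CStarModuleRight A E] [CompleteSpace E]
    {J : Type*} (x : J → E) (c₁ c₂ : ℝ) (hx : IsStandardFrame (A := A) x c₁ c₂)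
    (W Winv : E →L[ℂ] E)
    (hW : ∀ v : E, HasSum (fun j => x j <• (inner A (x j) v)) (W v))
    (hWinv₁ : ∀ v : E, W (Winv v) = v) (hWinv₂ : ∀ v : E, Winv (W v) = v)
    (g : J → E) (hg : ∀ j, g j = Winv (x j)) :
    ∀ (J' : Finset J) (v : E),
      ‖∑ j ∈ J', x j <• (inner A (g j) v)‖ ≤ (c₂ / c₁) * ‖v‖ := by
  obtain ⟨hc₁, hc₂, hS⟩ := hx
  -- inner v (W v) is the sum of the frame series
  have hWS : ∀ u v : E, HasSum (fun j => (inner A u (x j) : A) * (inner A (x j) v : A))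
      (inner A u (W v)) := by
    intro u v
    have := (hW v).mapL (CStarModuleRight.innerSL (A := A) u)
    simpa [CStarModuleRight.innerSL_apply, CStarModuleRight.inner_op_smul_right] using this
  -- partial frame bound
  have key : ∀ (v : E) (s : Finset J),
      ‖∑ j ∈ s, (inner A v (x j) : A) * (inner A (x j) v : A)‖ ≤ c₂ * ‖v‖ ^ 2 := by
    intro v s
    obtain ⟨S, hsum, h1, h2⟩ := hS v
    have hpos : ∀ j, (0 : A) ≤ (inner A v (x j) : A) * (inner A (x j) v : A) := fun j => by
      rw [← CStarModuleRight.star_inner (x j) v]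
      exact star_mul_self_nonneg _
    have hle : ∑ j ∈ s, (inner A v (x j) : A) * (inner A (x j) v : A) ≤ c₂ • (inner A v v : A) :=
      (sum_le_hasSum s (fun j _ => hpos j) hsum).trans h2
    calc ‖∑ j ∈ s, (inner A v (x j) : A) * (inner A (x j) v : A)‖
        ≤ ‖c₂ • (inner A v v : A)‖ :=
          CStarAlgebra.norm_le_norm_of_nonneg_of_le
            (Finset.sum_nonneg fun j _ => hpos j) hle
      _ = c₂ * ‖v‖ ^ 2 := by
          rw [norm_smul, CStarModuleRight.norm_sq_eq, Real.norm_eq_abs, abs_of_pos hc₂]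
  -- lower bound for W
  have hWlow : ∀ v : E, c₁ * ‖v‖ ≤ ‖W v‖ := by
    intro v
    rcases eq_or_ne v 0 with rfl | hv
    · simp
    obtain ⟨S, hsum, h1, h2⟩ := hS v
    have hSW : S = inner A v (W v) := hsum.unique (hWS v v)
    have hnn : (0 : A) ≤ c₁ • (inner A v v : A) :=
      smul_nonneg hc₁.le CStarModuleRight.inner_self_nonneg
    have h3 : c₁ * ‖v‖ ^ 2 ≤ ‖(inner A v (W v) : A)‖ := by
      calc c₁ * ‖v‖ ^ 2 = ‖c₁ • (inner A v v : A)‖ := by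
            rw [norm_smul, CStarModuleRight.norm_sq_eq, Real.norm_eq_abs, abs_of_pos hc₁]
        _ ≤ ‖S‖ := CStarAlgebra.norm_le_norm_of_nonneg_of_le hnn h1
        _ = ‖(inner A v (W v) : A)‖ := by rw [hSW]
    have h4 : ‖(inner A v (W v) : A)‖ ≤ ‖v‖ * ‖W v‖ := CStarModuleRight.norm_inner_le E
    have hv' : 0 < ‖v‖ := norm_pos_iff.mpr hv
    nlinarith [h3.trans h4]
  have hWinvnorm : ∀ v : E, ‖Winv v‖ ≤ c₁⁻¹ * ‖v‖ := by
    intro v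
    have := hWlow (Winv v)
    rw [hWinv₁ v] at this
    rw [inv_mul_eq_div, le_div_iff₀ hc₁]
    linarith [this]
  -- self-adjointness of W and of Winv
  have hWsa : ∀ u w : E, (inner A (W u) w : A) = inner A u (W w) := by
    intro u w
    have h2 := (hWS w u).star
    have h2' : HasSum (fun j => (inner A u (x j) : A) * (inner A (x j) w : A))
        (inner A (W u) w : A) := by
      rw [← CStarModuleRight.star_inner w (W u)]
      convert h2 using 2 with j
      rw [star_mul, CStarModuleRight.star_inner, CStarModuleRight.star_inner]
    exact h2'.unique (hWS u w)
  have hWinvsa : ∀ u w : E, (inner A (Winv u) w : A) = inner A u (Winv w) := by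
    intro u w
    calc (inner A (Winv u) w : A) = inner A (Winv u) (W (Winv w)) := by rw [hWinv₁]
      _ = inner A (W (Winv u)) (Winv w) := (hWsa _ _).symm
      _ = inner A u (Winv w) := by rw [hWinv₁]
  intro J' v
  set w := Winv v with hw
  have hgj : ∀ j, (inner A (g j) v : A) = inner A (x j) w := fun j => by
    rw [hg j]; exact hWinvsa (x j) v
  set u := ∑ j ∈ J', x j <• (inner A (g j) v : A) with hu
  have huu : (inner A u u : A) = ∑ j ∈ J', (inner A u (x j) : A) * (inner A (x j) w : A) := by
    rw [hu]
    rw [CStarModuleRight.inner_sum_right]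
    exact Finset.sum_congr rfl fun j _ => by
      rw [CStarModuleRight.inner_op_smul_right, hgj j]
  -- ‖u‖² ≤ c₂ ‖u‖ ‖w‖
  have hcs : ‖u‖ ^ 2 ≤ c₂ * ‖u‖ * ‖w‖ := by
    have h0 : ‖u‖ ^ 2 = ‖(inner A u u : A)‖ := CStarModuleRight.norm_sq_eq
    have hcs' := cstar_sum_cauchy_schwarz (ι := ↥J')
      (fun j => (inner A (x (j : J)) u : A)) (fun j => (inner A (x (j : J)) w : A))
    have estar : ∀ (y z : E) (j : J), star (inner A (x j) y : A) * (inner A (x j) z : A)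
        = (inner A y (x j) : A) * (inner A (x j) z : A) := fun y z j => by
      rw [CStarModuleRight.star_inner]
    have e1 : ∑ j : ↥J', star (inner A (x (j : J)) u : A) * (inner A (x (j : J)) w : A)
        = (inner A u u : A) := by
      simp only [estar]
      rw [huu, Finset.sum_coe_sort J' (fun j => (inner A u (x j) : A) * (inner A (x j) w : A))]
    have e2 : ∑ j : ↥J', star (inner A (x (j : J)) u : A) * (inner A (x (j : J)) u : A)
        = ∑ j ∈ J', (inner A u (x j) : A) * (inner A (x j) u : A) := by
      simp only [estar]
      rw [Finset.sum_coe_sort J' (fun j => (inner A u (x j) : A) * (inner A (x j) u : A))]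
    have e3 : ∑ j : ↥J', star (inner A (x (j : J)) w : A) * (inner A (x (j : J)) w : A)
        = ∑ j ∈ J', (inner A w (x j) : A) * (inner A (x j) w : A) := by
      simp only [estar]
      rw [Finset.sum_coe_sort J' (fun j => (inner A w (x j) : A) * (inner A (x j) w : A))]
    rw [e1, e2, e3] at hcs'
    have b1 := key u J'
    have b2 := key w J'
    have s1 : Real.sqrt ‖∑ j ∈ J', (inner A u (x j) : A) * (inner A (x j) u : A)‖
        ≤ Real.sqrt c₂ * ‖u‖ := by
      rw [show Real.sqrt c₂ * ‖u‖ = Real.sqrt (c₂ * ‖u‖ ^ 2) by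
        rw [Real.sqrt_mul hc₂.le, Real.sqrt_sq (norm_nonneg _)]]
      exact Real.sqrt_le_sqrt b1
    have s2 : Real.sqrt ‖∑ j ∈ J', (inner A w (x j) : A) * (inner A (x j) w : A)‖
        ≤ Real.sqrt c₂ * ‖w‖ := by
      rw [show Real.sqrt c₂ * ‖w‖ = Real.sqrt (c₂ * ‖w‖ ^ 2) by
        rw [Real.sqrt_mul hc₂.le, Real.sqrt_sq (norm_nonneg _)]]
      exact Real.sqrt_le_sqrt b2
    calc ‖u‖ ^ 2 = ‖(inner A u u : A)‖ := h0
      _ ≤ _ := hcs'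
      _ ≤ (Real.sqrt c₂ * ‖u‖) * (Real.sqrt c₂ * ‖w‖) := by
          apply mul_le_mul s1 s2 (Real.sqrt_nonneg _)
            (by positivity)
      _ = c₂ * ‖u‖ * ‖w‖ := by
          rw [show (Real.sqrt c₂ * ‖u‖) * (Real.sqrt c₂ * ‖w‖)
            = (Real.sqrt c₂ * Real.sqrt c₂) * ‖u‖ * ‖w‖ by ring,
            Real.mul_self_sqrt hc₂.le]
  have hub : ‖u‖ ≤ c₂ * ‖w‖ := by
    rcases eq_or_lt_of_le (norm_nonneg u) with h0 | h0
    · rw [← h0]; positivity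
    · nlinarith
  calc ‖u‖ ≤ c₂ * ‖w‖ := hub
    _ ≤ c₂ * (c₁⁻¹ * ‖v‖) := by
        exact mul_le_mul_of_nonneg_left (hWinvnorm v) hc₂.le
    _ = (c₂ / c₁) * ‖v‖ := by ring
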